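/- For any complex number z with Re z > 0 and any real λ ≥ 0, one has |sinh(λ z)/z| ≤ (e^{λ Re z} − 1)/Re z. -/

import Mathlib

/-!
Writing `sinh (λ z) / z = ∫₀^λ cosh (s z) ds` and using `‖cosh w‖ ≤ cosh (Re w)` gives
`‖sinh (λ z) / z‖ ≤ ∫₀^λ cosh (s Re z) ds = sinh (λ Re z) / Re z`, and `sinh t ≤ eᵗ - 1`
because `cosh t ≥ 1`.
-/

open intervalIntegral

theorem integral_cosh_mul_complex {z : ℂ} (hz : z ≠ 0) (a b : ℝ) :
    ∫ x in a..b, Complex.cosh (z * x) = Complex.sinh (z * b) / z - Complex.sinh (z * a) / z := by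
  have hzI : z * Complex.I ≠ 0 := mul_ne_zero hz Complex.I_ne_zero
  have key := integral_cos_mul_complex hzI a b
  simp only [mul_right_comm z Complex.I, Complex.cos_mul_I, Complex.sin_mul_I,
    mul_div_mul_right _ _ Complex.I_ne_zero] at key
  exact key

theorem Real.integral_cosh_mul {c : ℝ} (hc : c ≠ 0) (a b : ℝ) :
    ∫ x in a..b, Real.cosh (c * x) = Real.sinh (c * b) / c - Real.sinh (c * a) / c := by
  have key := integral_cosh_mul_complex (Complex.ofReal_ne_zero.mpr hc) a b
  rw [← Complex.ofReal_inj, ← integral_ofReal]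
  push_cast
  exact key

theorem Complex.norm_cosh_le_cosh_re (w : ℂ) : ‖Complex.cosh w‖ ≤ Real.cosh w.re := by
  rw [Complex.cosh, Real.cosh_eq, norm_div, Complex.norm_two]
  gcongr
  calc ‖Complex.exp w + Complex.exp (-w)‖ ≤ ‖Complex.exp w‖ + ‖Complex.exp (-w)‖ := norm_add_le _ _
    _ = Real.exp w.re + Real.exp (-w.re) := by simp only [Complex.norm_exp, Complex.neg_re]

theorem Real.sinh_le_exp_sub_one (x : ℝ) : Real.sinh x ≤ Real.exp x - 1 := by
  have := Real.one_le_cosh x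
  rw [Real.cosh_eq] at this
  rw [Real.sinh_eq]
  linarith

theorem Complex.norm_sinh_mul_div_le {z : ℂ} (hz : z.re ≠ 0) {lam : ℝ} (hlam : 0 ≤ lam) :
    ‖Complex.sinh (lam * z) / z‖ ≤ Real.sinh (lam * z.re) / z.re := by
  have hz0 : z ≠ 0 := fun h => hz (by simp [h])
  calc ‖Complex.sinh (lam * z) / z‖ = ‖∫ s in (0 : ℝ)..lam, Complex.cosh (z * s)‖ := by
        rw [integral_cosh_mul_complex hz0, mul_comm]; simp
    _ ≤ ∫ s in (0 : ℝ)..lam, Real.cosh (z.re * s) := by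
        refine norm_integral_le_of_norm_le hlam (.of_forall fun s _ => ?_)
          ((by fun_prop : Continuous _).intervalIntegrable _ _)
        simpa using Complex.norm_cosh_le_cosh_re (z * s)
    _ = Real.sinh (lam * z.re) / z.re := by
        rw [Real.integral_cosh_mul hz, mul_comm]; simp

theorem abs_sinh_div_le (z : ℂ) (hz : 0 < z.re) (lam : ℝ) (hlam : 0 ≤ lam) :
    ‖Complex.sinh (lam * z) / z‖ ≤ (Real.exp (lam * z.re) - 1) / z.re :=
  (Complex.norm_sinh_mul_div_le hz.ne' hlam).trans
    (div_le_div_of_nonneg_right (Real.sinh_le_exp_sub_one _) hz.le)
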